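/- Under Product semantics, the knowledge base K2 is satisfiable in a witnessed fuzzy interpretation but is not satisfiable in any fuzzy interpretation with finite domain. -/
import Mathlib


/-- ALC concepts over a single atomic concept `A` and a single role `R`. -/
inductive ALCConcept : Type where
  | atom : ALCConcept
  | top  : ALCConcept
  | bot  : ALCConcept
  | conj : ALCConcept → ALCConcept → ALCConcept
  | disj : ALCConcept → ALCConcept → ALCConcept
  | neg  : ALCConcept → ALCConcept
  | all  : ALCConcept → ALCConcept
  | ex   : ALCConcept → ALCConcept

/-- Product t-norm. -/
def prodT (x y : ℝ) : ℝ := x * y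
/-- Product t-conorm. -/
def prodS (x y : ℝ) : ℝ := x + y - x * y
/-- Product negation. -/
noncomputable def prodNeg (x : ℝ) : ℝ := if x = 0 then 1 else 0
/-- Product (Goguen) implication. -/
noncomputable def prodImp (x y : ℝ) : ℝ := if x ≤ y then 1 else y / x

/-- Value of a concept at a point under Product semantics. -/
noncomputable def prodVal {Δ : Type} (A : Δ → ℝ) (R : Δ → Δ → ℝ) : ALCConcept → Δ → ℝ
  | ALCConcept.atom, x => A x
  | ALCConcept.top, _ => 1
  | ALCConcept.bot, _ => 0
  | ALCConcept.conj C D, x => prodT (prodVal A R C x) (prodVal A R D x)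
  | ALCConcept.disj C D, x => prodS (prodVal A R C x) (prodVal A R D x)
  | ALCConcept.neg C, x => prodNeg (prodVal A R C x)
  | ALCConcept.all C, x => ⨅ y, prodImp (R x y) (prodVal A R C y)
  | ALCConcept.ex C, x => ⨆ y, prodT (R x y) (prodVal A R C y)

/-- Degree of subsumption `(C ⊑ D)^I` under Product semantics. -/
noncomputable def prodSub {Δ : Type} (A : Δ → ℝ) (R : Δ → Δ → ℝ) (C D : ALCConcept) : ℝ :=
  ⨅ x, prodImp (prodVal A R C x) (prodVal A R D x)

/-- A fuzzy interpretation: nonempty domain, values in `[0,1]`. -/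
def IsInterp {Δ : Type} (A : Δ → ℝ) (R : Δ → Δ → ℝ) : Prop :=
  Nonempty Δ ∧ (∀ x, A x ∈ Set.Icc (0:ℝ) 1) ∧ (∀ x y, R x y ∈ Set.Icc (0:ℝ) 1)

/-- Witnessed interpretation under Product semantics. -/
def Witnessed {Δ : Type} (A : Δ → ℝ) (R : Δ → Δ → ℝ) : Prop :=
  ∀ (C D : ALCConcept) (x : Δ),
    (∃ y, prodVal A R (ALCConcept.ex C) x = prodT (R x y) (prodVal A R C y)) ∧
    (∃ y, prodVal A R (ALCConcept.all C) x = prodImp (R x y) (prodVal A R C y)) ∧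
    (∃ y, prodSub A R C D = prodImp (prodVal A R C y) (prodVal A R D y))

/-- `I` (with designated element `a`) is a model of the knowledge base `K2`. -/
def ModelK2 {Δ : Type} (A : Δ → ℝ) (R : Δ → Δ → ℝ) (a : Δ) : Prop :=
  A a = 1/2 ∧
  prodSub A R ALCConcept.top (ALCConcept.ex ALCConcept.top) = 1 ∧
  (prodSub A R (ALCConcept.all ALCConcept.atom) (ALCConcept.ex ALCConcept.atom) = 1 ∧
   prodSub A R (ALCConcept.ex ALCConcept.atom) (ALCConcept.all ALCConcept.atom) = 1) ∧
  (prodSub A R ALCConcept.atom (ALCConcept.conj (ALCConcept.all ALCConcept.atom) (ALCConcept.all ALCConcept.atom)) = 1 ∧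
   prodSub A R (ALCConcept.conj (ALCConcept.all ALCConcept.atom) (ALCConcept.all ALCConcept.atom)) ALCConcept.atom = 1)

section Aux

open Set

/-! ### Basic facts about `prodImp` -/

lemma prodImp_of_le {x y : ℝ} (h : x ≤ y) : prodImp x y = 1 := if_pos h

lemma prodImp_self (x : ℝ) : prodImp x x = 1 := if_pos le_rfl

lemma prodImp_nonneg {x y : ℝ} (hy : 0 ≤ y) : 0 ≤ prodImp x y := by
  unfold prodImp; split
  · norm_num
  · exact div_nonneg hy (le_of_lt (lt_of_le_of_lt hy (lt_of_not_ge ‹_›)))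

lemma prodImp_le_one {x y : ℝ} (hy : 0 ≤ y) : prodImp x y ≤ 1 := by
  unfold prodImp; split
  · exact le_refl 1
  · have hx : 0 < x := lt_of_le_of_lt hy (lt_of_not_ge ‹_›)
    exact (div_le_one hx).2 (le_of_lt (lt_of_not_ge ‹_›))

lemma prodImp_one_left {y : ℝ} (hy : y ≤ 1) : prodImp 1 y = y := by
  unfold prodImp; split
  · have : y = 1 := le_antisymm hy ‹_›
    rw [this]
  · exact div_one y

lemma prodImp_zero_right {x : ℝ} (hx : 0 < x) : prodImp x 0 = 0 := by
  unfold prodImp; rw [if_neg (not_le.2 hx), zero_div]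

lemma le_of_prodImp_eq_one {x y : ℝ} (hy : 0 ≤ y) (h : prodImp x y = 1) : x ≤ y := by
  by_contra hlt
  push_neg at hlt
  unfold prodImp at h
  rw [if_neg (not_le.2 hlt)] at h
  have hx : 0 < x := lt_of_le_of_lt hy hlt
  rw [div_eq_one_iff_eq hx.ne'] at h
  exact absurd h (ne_of_lt hlt)

lemma le_prodImp {x y : ℝ} (hx1 : x ≤ 1) (hy : 0 ≤ y) (hy1 : y ≤ 1) : y ≤ prodImp x y := by
  unfold prodImp; split
  · exact hy1
  · have hyx : y < x := lt_of_not_ge ‹_›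
    have hx : 0 < x := lt_of_le_of_lt hy hyx
    rw [le_div_iff₀ hx]
    nlinarith

/-! ### Bounds on `prodVal` -/

lemma prodVal_bounds {Δ : Type} [Nonempty Δ] {A : Δ → ℝ} {R : Δ → Δ → ℝ}
    (hA : ∀ x, A x ∈ Set.Icc (0:ℝ) 1) (hR : ∀ x y, R x y ∈ Set.Icc (0:ℝ) 1) :
    ∀ (C : ALCConcept) (x : Δ), prodVal A R C x ∈ Set.Icc (0:ℝ) 1 := by
  intro C
  induction C with
  | atom => exact hA
  | top => intro x; simp [prodVal]
  | bot => intro x; simp [prodVal]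
  | conj C D ihC ihD =>
    intro x
    have h1 := ihC x; have h2 := ihD x
    simp only [prodVal, prodT, Set.mem_Icc] at *
    constructor
    · exact mul_nonneg h1.1 h2.1
    · nlinarith
  | disj C D ihC ihD =>
    intro x
    have h1 := ihC x; have h2 := ihD x
    simp only [prodVal, prodS, Set.mem_Icc] at *
    constructor <;> nlinarith
  | neg C ih =>
    intro x
    simp only [prodVal, prodNeg]
    split <;> norm_num
  | all C ih =>
    intro x
    constructor
    · exact le_ciInf fun y => prodImp_nonneg (ih y).1
    · refine ciInf_le_of_le ⟨0, ?_⟩ (Classical.arbitrary Δ) (prodImp_le_one (ih _).1)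
      rintro _ ⟨y, rfl⟩
      exact prodImp_nonneg (ih y).1
  | ex C ih =>
    intro x
    constructor
    · exact Real.iSup_nonneg fun y => mul_nonneg (hR x y).1 (ih y).1
    · exact ciSup_le fun y => by
        have := (hR x y).2; have := (ih y).1; have := (ih y).2; have := (hR x y).1
        simp only [prodT]; nlinarith

/-! ### Subsumption degree 1 versus pointwise inequality -/

lemma prodSub_eq_one_of_le {Δ : Type} [Nonempty Δ] {A : Δ → ℝ} {R : Δ → Δ → ℝ}
    {C D : ALCConcept} (h : ∀ x, prodVal A R C x ≤ prodVal A R D x) :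
    prodSub A R C D = 1 := by
  unfold prodSub
  have : (fun x => prodImp (prodVal A R C x) (prodVal A R D x)) = fun _ => (1:ℝ) :=
    funext fun x => prodImp_of_le (h x)
  rw [this, ciInf_const]

lemma le_of_prodSub_eq_one {Δ : Type} [Nonempty Δ] {A : Δ → ℝ} {R : Δ → Δ → ℝ}
    {C D : ALCConcept} (hD : ∀ x, 0 ≤ prodVal A R D x)
    (h : prodSub A R C D = 1) (x : Δ) :
    prodVal A R C x ≤ prodVal A R D x := by
  have hb : BddBelow (Set.range fun x => prodImp (prodVal A R C x) (prodVal A R D x)) := by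
    refine ⟨0, ?_⟩; rintro _ ⟨y, rfl⟩; exact prodImp_nonneg (hD y)
  have h1 : (1:ℝ) ≤ prodImp (prodVal A R C x) (prodVal A R D x) := h ▸ ciInf_le hb x
  exact le_of_prodImp_eq_one (hD x) (le_antisymm (prodImp_le_one (hD x)) h1)

end Aux

section Chain

/-! ### The chain model on ℕ -/

/-- Role of the chain model: `R n (n+1) = 1`, else `0`. -/
noncomputable def Rch : ℕ → ℕ → ℝ := fun x y => if y = x + 1 then 1 else 0

/-- Atomic values of the chain model: `Ach n = 2 ^ (-(1/2)^n)`. -/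
noncomputable def Ach : ℕ → ℝ := fun n => Real.exp (-(Real.log 2) * (1/2)^n)

lemma Ach_pos (n : ℕ) : 0 < Ach n := Real.exp_pos _

lemma Ach_lt_one (n : ℕ) : Ach n < 1 := by
  have hl : 0 < Real.log 2 := Real.log_pos (by norm_num)
  have hp : (0:ℝ) < (1/2)^n := by positivity
  have : -(Real.log 2) * (1/2)^n < 0 := by nlinarith
  simpa [Ach] using Real.exp_lt_one_iff.2 this

lemma Ach_zero : Ach 0 = 1/2 := by
  have : Ach 0 = Real.exp (-(Real.log 2)) := by simp [Ach]
  rw [this, Real.exp_neg, Real.exp_log (by norm_num : (0:ℝ) < 2)]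
  norm_num

lemma Ach_sq (n : ℕ) : Ach (n+1) * Ach (n+1) = Ach n := by
  unfold Ach
  rw [← Real.exp_add]
  congr 1
  rw [pow_succ]
  ring

lemma Ach_mono : Monotone Ach := by
  intro a b hab
  have hl : 0 < Real.log 2 := Real.log_pos (by norm_num)
  have hp : (1/2:ℝ)^b ≤ (1/2)^a :=
    pow_le_pow_of_le_one (by norm_num) (by norm_num) hab
  exact Real.exp_le_exp.2 (by nlinarith)

lemma Ach_mem (n : ℕ) : Ach n ∈ Set.Icc (0:ℝ) 1 :=
  ⟨(Ach_pos n).le, (Ach_lt_one n).le⟩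

lemma Rch_mem (x y : ℕ) : Rch x y ∈ Set.Icc (0:ℝ) 1 := by
  unfold Rch; split <;> norm_num

lemma Ach_lim : ∀ c < (1:ℝ), ∃ n, c < Ach n := by
  intro c hc
  rcases lt_or_ge c (1/2) with h | h
  · exact ⟨0, by rw [Ach_zero]; exact h⟩
  · have hc0 : 0 < c := lt_of_lt_of_le (by norm_num) h
    have hlc : Real.log c < 0 := Real.log_neg hc0 hc
    have hl2 : 0 < Real.log 2 := Real.log_pos (by norm_num)
    obtain ⟨n, hn⟩ := exists_pow_lt_of_lt_one
      (div_pos (neg_pos.2 hlc) hl2)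
      (show (1/2:ℝ) < 1 by norm_num)
    refine ⟨n, ?_⟩
    have h2 : Real.log c < -(Real.log 2) * (1/2)^n := by
      rw [lt_div_iff₀ hl2] at hn
      nlinarith
    calc c = Real.exp (Real.log c) := (Real.exp_log hc0).symm
      _ < Ach n := Real.exp_lt_exp.2 h2

lemma vch_bounds (C : ALCConcept) (x : ℕ) : prodVal Ach Rch C x ∈ Set.Icc (0:ℝ) 1 :=
  prodVal_bounds Ach_mem Rch_mem C x

lemma vch_all (C : ALCConcept) (n : ℕ) :
    prodVal Ach Rch (ALCConcept.all C) n = prodVal Ach Rch C (n+1) := by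
  have hval : prodImp (Rch n (n+1)) (prodVal Ach Rch C (n+1)) = prodVal Ach Rch C (n+1) := by
    have : Rch n (n+1) = 1 := if_pos rfl
    rw [this, prodImp_one_left (vch_bounds C (n+1)).2]
  show (⨅ y, prodImp (Rch n y) (prodVal Ach Rch C y)) = _
  apply le_antisymm
  · refine ciInf_le_of_le ⟨0, ?_⟩ (n+1) (le_of_eq hval)
    rintro _ ⟨y, rfl⟩
    exact prodImp_nonneg (vch_bounds C y).1
  · refine le_ciInf fun y => ?_
    by_cases hy : y = n + 1
    · subst hy; exact le_of_eq hval.symm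
    · have : Rch n y = 0 := if_neg hy
      rw [this, prodImp_of_le (vch_bounds C y).1]
      exact (vch_bounds C (n+1)).2

lemma vch_ex (C : ALCConcept) (n : ℕ) :
    prodVal Ach Rch (ALCConcept.ex C) n = prodVal Ach Rch C (n+1) := by
  have hval : prodT (Rch n (n+1)) (prodVal Ach Rch C (n+1)) = prodVal Ach Rch C (n+1) := by
    have : Rch n (n+1) = 1 := if_pos rfl
    rw [this, prodT, one_mul]
  show (⨆ y, prodT (Rch n y) (prodVal Ach Rch C y)) = _
  apply le_antisymm
  · refine ciSup_le fun y => ?_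
    by_cases hy : y = n + 1
    · subst hy; exact le_of_eq hval
    · have : Rch n y = 0 := if_neg hy
      rw [this, prodT, zero_mul]
      exact (vch_bounds C (n+1)).1
  · refine le_ciSup_of_le ⟨1, ?_⟩ (n+1) (le_of_eq hval.symm)
    rintro _ ⟨y, rfl⟩
    have h1 := Rch_mem n y
    have h2 := vch_bounds C y
    simp only [prodT]
    nlinarith [h1.1, h1.2, h2.1, h2.2]

end Chain

section Invariant

/-- Structural invariant of concept values in the chain model. -/
def GoodSeq (v : ℕ → ℝ) : Prop :=
  (∀ n, 0 < v n) ∧ Monotone v ∧ ∀ c < (1:ℝ), ∃ n, c < v n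

lemma vch_invariant (C : ALCConcept) :
    (∀ n, prodVal Ach Rch C n = 0) ∨ GoodSeq (fun n => prodVal Ach Rch C n) := by
  induction C with
  | atom =>
    right
    exact ⟨fun n => Ach_pos n, Ach_mono, Ach_lim⟩
  | top =>
    right
    refine ⟨fun n => by simp [prodVal], fun a b _ => by simp [prodVal], fun c hc => ⟨0, by simpa [prodVal] using hc⟩⟩
  | bot =>
    left; intro n; simp [prodVal]
  | conj C D ihC ihD =>
    have hvC := vch_bounds C
    have hvD := vch_bounds D
    rcases ihC with hC | hC
    · left; intro n; simp [prodVal, prodT, hC n]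
    rcases ihD with hD | hD
    · left; intro n; simp [prodVal, prodT, hD n]
    right
    obtain ⟨hCp, hCm, hCl⟩ := hC
    obtain ⟨hDp, hDm, hDl⟩ := hD
    refine ⟨fun n => mul_pos (hCp n) (hDp n), ?_, ?_⟩
    · intro a b hab
      simp only [prodVal, prodT]
      exact mul_le_mul (hCm hab) (hDm hab) (hDp a).le (hvC b).1
    · intro c hc
      rcases le_or_gt c 0 with h0 | h0
      · exact ⟨0, lt_of_le_of_lt h0 (mul_pos (hCp 0) (hDp 0))⟩
      · have hs1 : Real.sqrt c < 1 := by
          rw [show (1:ℝ) = Real.sqrt 1 by simp]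
          exact Real.sqrt_lt_sqrt h0.le hc
        obtain ⟨n1, hn1⟩ := hCl _ hs1
        obtain ⟨n2, hn2⟩ := hDl _ hs1
        refine ⟨max n1 n2, ?_⟩
        have h1 : Real.sqrt c < prodVal Ach Rch C (max n1 n2) :=
          lt_of_lt_of_le hn1 (hCm (le_max_left n1 n2))
        have h2 : Real.sqrt c < prodVal Ach Rch D (max n1 n2) :=
          lt_of_lt_of_le hn2 (hDm (le_max_right n1 n2))
        have hs0 : 0 ≤ Real.sqrt c := Real.sqrt_nonneg c
        have hcc : Real.sqrt c * Real.sqrt c = c := Real.mul_self_sqrt h0.le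
        show c < prodVal Ach Rch C (max n1 n2) * prodVal Ach Rch D (max n1 n2)
        nlinarith
  | disj C D ihC ihD =>
    have hvC := vch_bounds C
    have hvD := vch_bounds D
    have key : ∀ (C' D' : ALCConcept), GoodSeq (fun n => prodVal Ach Rch C' n) →
        (∀ n, prodVal Ach Rch C' n ≤ prodVal Ach Rch (ALCConcept.disj C' D') n) →
        Monotone (fun n => prodVal Ach Rch (ALCConcept.disj C' D') n) →
        GoodSeq (fun n => prodVal Ach Rch (ALCConcept.disj C' D') n) := by
      intro C' D' ⟨hp, hm, hl⟩ hle hmono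
      refine ⟨fun n => lt_of_lt_of_le (hp n) (hle n), hmono, fun c hc => ?_⟩
      obtain ⟨n, hn⟩ := hl c hc
      exact ⟨n, lt_of_lt_of_le hn (hle n)⟩
    have hle1 : ∀ n, prodVal Ach Rch C n ≤ prodVal Ach Rch (ALCConcept.disj C D) n := by
      intro n
      have h1 := vch_bounds C n; have h2 := vch_bounds D n
      simp only [prodVal, prodS]
      nlinarith [h1.1, h1.2, h2.1, h2.2]
    have hle2 : ∀ n, prodVal Ach Rch D n ≤ prodVal Ach Rch (ALCConcept.disj C D) n := by
      intro n
      have h1 := vch_bounds C n; have h2 := vch_bounds D n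
      simp only [prodVal, prodS]
      nlinarith [h1.1, h1.2, h2.1, h2.2]
    rcases ihC with hC | hC <;> rcases ihD with hD | hD
    · left; intro n; simp [prodVal, prodS, hC n, hD n]
    · -- C ≡ 0, D good : disj = D
      have heq : ∀ n, prodVal Ach Rch (ALCConcept.disj C D) n = prodVal Ach Rch D n := by
        intro n; simp [prodVal, prodS, hC n]
      right
      obtain ⟨hp, hm, hl⟩ := hD
      refine ⟨fun n => ?_, fun a b hab => ?_, fun c hc => ?_⟩
      · show 0 < prodVal Ach Rch (ALCConcept.disj C D) n
        rw [heq n]; exact hp n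
      · show prodVal Ach Rch (ALCConcept.disj C D) a ≤ prodVal Ach Rch (ALCConcept.disj C D) b
        rw [heq a, heq b]; exact hm hab
      · obtain ⟨n, hn⟩ := hl c hc
        exact ⟨n, by show c < prodVal Ach Rch (ALCConcept.disj C D) n; rw [heq n]; exact hn⟩
    · have heq : ∀ n, prodVal Ach Rch (ALCConcept.disj C D) n = prodVal Ach Rch C n := by
        intro n; simp [prodVal, prodS, hD n]
      right
      obtain ⟨hp, hm, hl⟩ := hC
      refine ⟨fun n => ?_, fun a b hab => ?_, fun c hc => ?_⟩
      · show 0 < prodVal Ach Rch (ALCConcept.disj C D) n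
        rw [heq n]; exact hp n
      · show prodVal Ach Rch (ALCConcept.disj C D) a ≤ prodVal Ach Rch (ALCConcept.disj C D) b
        rw [heq a, heq b]; exact hm hab
      · obtain ⟨n, hn⟩ := hl c hc
        exact ⟨n, by show c < prodVal Ach Rch (ALCConcept.disj C D) n; rw [heq n]; exact hn⟩
    · right
      refine key C D hC hle1 ?_
      intro a b hab
      have h1a := vch_bounds C a; have h2a := vch_bounds D a
      have h1b := vch_bounds C b; have h2b := vch_bounds D b
      have hCa : prodVal Ach Rch C a ≤ prodVal Ach Rch C b := hC.2.1 hab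
      have hDa : prodVal Ach Rch D a ≤ prodVal Ach Rch D b := hD.2.1 hab
      simp only [prodVal, prodS]
      nlinarith [h1a.1, h1a.2, h2a.1, h2a.2, h1b.1, h1b.2, h2b.1, h2b.2]
  | neg C ih =>
    rcases ih with h | h
    · right
      refine ⟨fun n => ?_, fun a b _ => le_of_eq ?_, fun c hc => ⟨0, ?_⟩⟩
      · simp [prodVal, prodNeg, h n]
      · simp [prodVal, prodNeg, h a, h b]
      · simpa [prodVal, prodNeg, h 0] using hc
    · left
      intro n
      simp [prodVal, prodNeg, (h.1 n).ne']
  | all C ih =>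
    rcases ih with h | h
    · left; intro n; rw [vch_all]; exact h (n+1)
    · right
      obtain ⟨hp, hm, hl⟩ := h
      refine ⟨fun n => by show 0 < prodVal Ach Rch (ALCConcept.all C) n; rw [vch_all]; exact hp (n+1), fun a b hab => ?_, fun c hc => ?_⟩
      · show prodVal Ach Rch (ALCConcept.all C) a ≤ prodVal Ach Rch (ALCConcept.all C) b
        rw [vch_all, vch_all]; exact hm (Nat.succ_le_succ hab)
      · obtain ⟨n, hn⟩ := hl c hc
        refine ⟨n, ?_⟩
        show c < prodVal Ach Rch (ALCConcept.all C) n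
        rw [vch_all]
        exact lt_of_lt_of_le hn (hm (Nat.le_succ n))
  | ex C ih =>
    rcases ih with h | h
    · left; intro n; rw [vch_ex]; exact h (n+1)
    · right
      obtain ⟨hp, hm, hl⟩ := h
      refine ⟨fun n => by show 0 < prodVal Ach Rch (ALCConcept.ex C) n; rw [vch_ex]; exact hp (n+1), fun a b hab => ?_, fun c hc => ?_⟩
      · show prodVal Ach Rch (ALCConcept.ex C) a ≤ prodVal Ach Rch (ALCConcept.ex C) b
        rw [vch_ex, vch_ex]; exact hm (Nat.succ_le_succ hab)
      · obtain ⟨n, hn⟩ := hl c hc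
        refine ⟨n, ?_⟩
        show c < prodVal Ach Rch (ALCConcept.ex C) n
        rw [vch_ex]
        exact lt_of_lt_of_le hn (hm (Nat.le_succ n))

/-- The infimum of a sequence dominated below by a monotone sequence tending to 1,
and bounded above by 1, is attained. -/
lemma min_attained (h w : ℕ → ℝ) (hwm : Monotone w) (hwl : ∀ c < (1:ℝ), ∃ n, c < w n)
    (hle : ∀ n, w n ≤ h n) (h1 : ∀ n, h n ≤ 1) : ∃ m, (⨅ n, h n) = h m := by
  have hbb : BddBelow (Set.range h) := by
    refine ⟨w 0, ?_⟩
    rintro _ ⟨n, rfl⟩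
    exact le_trans (hwm (Nat.zero_le n)) (hle n)
  by_cases hall : ∀ n, h n = 1
  · refine ⟨0, ?_⟩
    have : h = fun _ => (1:ℝ) := funext hall
    rw [this, ciInf_const]
  · push_neg at hall
    obtain ⟨n₀, hn₀⟩ := hall
    have hn₀lt : h n₀ < 1 := lt_of_le_of_ne (h1 n₀) hn₀
    obtain ⟨N, hN⟩ := hwl (h n₀) hn₀lt
    have hn₀N : n₀ < N := by
      by_contra hcon
      push_neg at hcon
      exact absurd (lt_of_lt_of_le hN (le_trans (hwm hcon) (hle n₀))) (lt_irrefl _)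
    obtain ⟨m, hmmem, hmmin⟩ := Finset.exists_min_image (Finset.range N) h
      ⟨n₀, Finset.mem_range.2 hn₀N⟩
    refine ⟨m, le_antisymm (ciInf_le hbb m) (le_ciInf fun n => ?_)⟩
    rcases lt_or_ge n N with hn | hn
    · exact hmmin n (Finset.mem_range.2 hn)
    · have : h n₀ < h n := lt_of_lt_of_le hN (le_trans (hwm hn) (hle n))
      exact le_trans (hmmin n₀ (Finset.mem_range.2 hn₀N)) this.le

end Invariant

lemma vch_conj_allA (x : ℕ) :
    prodVal Ach Rch (ALCConcept.conj (ALCConcept.all ALCConcept.atom) (ALCConcept.all ALCConcept.atom)) x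
      = Ach x := by
  show prodT (prodVal Ach Rch (ALCConcept.all ALCConcept.atom) x)
      (prodVal Ach Rch (ALCConcept.all ALCConcept.atom) x) = Ach x
  rw [vch_all]
  show Ach (x+1) * Ach (x+1) = Ach x
  exact Ach_sq x

theorem stmt8 :
    (∃ (Δ : Type) (A : Δ → ℝ) (R : Δ → Δ → ℝ) (a : Δ),
      IsInterp A R ∧ Witnessed A R ∧ ModelK2 A R a) ∧
    ¬ (∃ (Δ : Type) (A : Δ → ℝ) (R : Δ → Δ → ℝ) (a : Δ),
      Finite Δ ∧ IsInterp A R ∧ ModelK2 A R a) := by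
  constructor
  · refine ⟨ℕ, Ach, Rch, 0, ⟨⟨0⟩, Ach_mem, Rch_mem⟩, ?_, ?_⟩
    · -- Witnessed
      intro C D x
      refine ⟨⟨x+1, ?_⟩, ⟨x+1, ?_⟩, ?_⟩
      · rw [vch_ex]
        have h : Rch x (x+1) = 1 := if_pos rfl
        rw [h, prodT, one_mul]
      · rw [vch_all]
        have h : Rch x (x+1) = 1 := if_pos rfl
        rw [h, prodImp_one_left (vch_bounds C (x+1)).2]
      · -- subsumption witness
        rcases vch_invariant C with hC | hC <;> rcases vch_invariant D with hD | hD
        · have heq : ∀ y, prodImp (prodVal Ach Rch C y) (prodVal Ach Rch D y) = 1 :=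
            fun y => by rw [hC y, hD y]; exact prodImp_self 0
          refine ⟨0, ?_⟩
          unfold prodSub
          rw [funext heq, ciInf_const]
          exact (heq 0).symm
        · have heq : ∀ y, prodImp (prodVal Ach Rch C y) (prodVal Ach Rch D y) = 1 :=
            fun y => by rw [hC y]; exact prodImp_of_le (vch_bounds D y).1
          refine ⟨0, ?_⟩
          unfold prodSub
          rw [funext heq, ciInf_const]
          exact (heq 0).symm
        · have heq : ∀ y, prodImp (prodVal Ach Rch C y) (prodVal Ach Rch D y) = 0 :=
            fun y => by rw [hD y]; exact prodImp_zero_right (hC.1 y)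
          refine ⟨0, ?_⟩
          unfold prodSub
          rw [funext heq, ciInf_const]
          exact (heq 0).symm
        · obtain ⟨m, hm⟩ := min_attained
            (fun y => prodImp (prodVal Ach Rch C y) (prodVal Ach Rch D y))
            (fun y => prodVal Ach Rch D y) hD.2.1 hD.2.2
            (fun n => le_prodImp (vch_bounds C n).2 (vch_bounds D n).1 (vch_bounds D n).2)
            (fun n => prodImp_le_one (vch_bounds D n).1)
          exact ⟨m, hm⟩
    · -- ModelK2
      refine ⟨Ach_zero, ?_, ⟨?_, ?_⟩, ?_, ?_⟩
      · apply prodSub_eq_one_of_le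
        intro x
        rw [vch_ex]
        show (1:ℝ) ≤ 1
        exact le_refl 1
      · apply prodSub_eq_one_of_le
        intro x
        rw [vch_all, vch_ex]
      · apply prodSub_eq_one_of_le
        intro x
        rw [vch_all, vch_ex]
      · apply prodSub_eq_one_of_le
        intro x
        rw [vch_conj_allA]
        show Ach x ≤ Ach x
        exact le_refl _
      · apply prodSub_eq_one_of_le
        intro x
        rw [vch_conj_allA]
        show Ach x ≤ Ach x
        exact le_refl _
  · rintro ⟨Δ, A, R, a, hfin, ⟨hne, hA, hR⟩, hM⟩
    haveI := hne
    haveI := hfin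
    have hbd := prodVal_bounds hA hR
    obtain ⟨hMa, hM2, ⟨hM3a, hM3b⟩, hM4a, hM4b⟩ := hM
    have p2 := le_of_prodSub_eq_one (fun x => (hbd _ x).1) hM2
    have p3a := le_of_prodSub_eq_one (fun x => (hbd _ x).1) hM3a
    have p3b := le_of_prodSub_eq_one (fun x => (hbd _ x).1) hM3b
    have p4a := le_of_prodSub_eq_one (fun x => (hbd _ x).1) hM4a
    have p4b := le_of_prodSub_eq_one (fun x => (hbd _ x).1) hM4b
    have hsucc : ∀ x : Δ, ∃ y, R x y = 1 := by
      intro x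
      obtain ⟨y₀, hy₀⟩ := Finite.exists_max (fun y => prodT (R x y) (prodVal A R ALCConcept.top y))
      have h1 : prodVal A R (ALCConcept.ex ALCConcept.top) x
          ≤ prodT (R x y₀) (prodVal A R ALCConcept.top y₀) := ciSup_le hy₀
      have h2 : (1:ℝ) ≤ prodT (R x y₀) (1:ℝ) := le_trans (p2 x) h1
      refine ⟨y₀, le_antisymm (hR x y₀).2 ?_⟩
      simpa [prodT] using h2
    have step : ∀ x : Δ, 0 < A x → A x < 1 → ∃ y, 0 < A y ∧ A y < 1 ∧ A x < A y := by
      intro x hx0 hx1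
      obtain ⟨y, hy⟩ := hsucc x
      set f := prodVal A R (ALCConcept.all ALCConcept.atom) x with hfdef
      set e := prodVal A R (ALCConcept.ex ALCConcept.atom) x with hedef
      have hef : e = f := le_antisymm (p3b x) (p3a x)
      have hsq : f * f = A x := by
        have h1 := p4a x
        have h2 := p4b x
        have hconj : prodVal A R (ALCConcept.conj (ALCConcept.all ALCConcept.atom)
            (ALCConcept.all ALCConcept.atom)) x = f * f := rfl
        have hatom : prodVal A R ALCConcept.atom x = A x := rfl
        rw [hconj, hatom] at h1 h2
        linarith
      have hf0 : 0 ≤ f := (hbd _ x).1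
      have hf1 : f ≤ 1 := (hbd _ x).2
      have hfpos : 0 < f := by nlinarith
      have hflt : f < 1 := by nlinarith
      have hBdd : BddAbove (Set.range fun z => prodT (R x z) (prodVal A R ALCConcept.atom z)) := by
        refine ⟨1, ?_⟩
        rintro _ ⟨z, rfl⟩
        have h1 := hR x z
        have h2 := hbd ALCConcept.atom z
        simp only [prodT]
        nlinarith [h1.1, h1.2, h2.1, h2.2]
      have hAy1 : A y ≤ e := by
        have h := le_ciSup hBdd y
        have : prodT (R x y) (prodVal A R ALCConcept.atom y) = A y := by
          rw [hy]; show (1:ℝ) * A y = A y; rw [one_mul]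
        rw [this] at h
        exact h
      have hBb : BddBelow (Set.range fun z => prodImp (R x z) (prodVal A R ALCConcept.atom z)) :=
        ⟨0, by rintro _ ⟨z, rfl⟩; exact prodImp_nonneg (hbd _ z).1⟩
      have hf_le : f ≤ prodImp (R x y) (prodVal A R ALCConcept.atom y) := ciInf_le hBb y
      have himp : prodImp (R x y) (prodVal A R ALCConcept.atom y) = A y := by
        rw [hy]
        exact prodImp_one_left (hA y).2
      rw [himp] at hf_le
      have hAyf : A y = f := le_antisymm (hef ▸ hAy1) hf_le
      refine ⟨y, ?_, ?_, ?_⟩ <;> rw [hAyf] <;> nlinarith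
    have ha : 0 < A a ∧ A a < 1 := by rw [hMa]; norm_num
    choose F hF1 hF2 hF3 using step
    let G : {x : Δ // 0 < A x ∧ A x < 1} → {x : Δ // 0 < A x ∧ A x < 1} :=
      fun p => ⟨F p.1 p.2.1 p.2.2, hF1 p.1 p.2.1 p.2.2, hF2 p.1 p.2.1 p.2.2⟩
    have hG : ∀ p, A p.1 < A (G p).1 := fun p => hF3 p.1 p.2.1 p.2.2
    let g : ℕ → {x : Δ // 0 < A x ∧ A x < 1} := fun n => G^[n] ⟨a, ha⟩
    have hsm : StrictMono fun n => A (g n).1 := by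
      apply strictMono_nat_of_lt_succ
      intro n
      have hit : g (n+1) = G (g n) := Function.iterate_succ_apply' G n _
      simp only [hit]
      exact hG (g n)
    have hinj : Function.Injective fun n => (g n).1 :=
      fun m n h => hsm.injective (congrArg A h)
    haveI : Infinite Δ := Infinite.of_injective _ hinj
    exact not_finite Δ
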